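/- Let R be a ring, n a nonnegative integer, and G an R-module with projective dimension at most n. Then every R-module in ^⊥(G^{⊥∞}) has projective dimension at most n. -/

import Mathlib

open CategoryTheory Opposite

noncomputable section

/-- The Ext group `Ext^n_R(M, N)` (as a `ℤ`-module). -/
def extMod (R : Type) [Ring R] (n : ℕ) (M N : ModuleCat.{0} R) : ModuleCat ℤ :=
  ((Ext ℤ (ModuleCat.{0} R) n).obj (op M)).obj N

variable (R : Type) [Ring R]

/-- `Ext^n_R(M,N) = 0`. -/
def extVanish (n : ℕ) (M N : ModuleCat.{0} R) : Prop :=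
  Subsingleton (extMod R n M N)

/-- `M^{⊥∞} = {X | Ext^i(M,X) = 0 for all i ≥ 1}`. -/
def perpInf (M : ModuleCat.{0} R) : Set (ModuleCat.{0} R) :=
  {X | ∀ i : ℕ, 1 ≤ i → extVanish R i M X}

/-- `^⊥𝒞 = {W | Ext^1(W,C) = 0 for all C ∈ 𝒞}`. -/
def leftPerp (𝒞 : Set (ModuleCat.{0} R)) : Set (ModuleCat.{0} R) :=
  {W | ∀ C ∈ 𝒞, extVanish R 1 W C}

/-- `𝒞^⊥ = {X | Ext^1(C,X) = 0 for all C ∈ 𝒞}`. -/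
def rightPerp (𝒞 : Set (ModuleCat.{0} R)) : Set (ModuleCat.{0} R) :=
  {X | ∀ C ∈ 𝒞, extVanish R 1 C X}

/-- Projective dimension at most `n`, via vanishing of `Ext^i` for `i ≥ n+1`. -/
def pdLE (n : ℕ) (M : ModuleCat.{0} R) : Prop :=
  ∀ (X : ModuleCat.{0} R) (i : ℕ), n + 1 ≤ i → extVanish R i M X

/-- `S` is a (first) syzygy of `M`: there is an exact sequence `0 → S → P → M → 0`
with `P` projective. -/
def IsSyzygy (S M : ModuleCat.{0} R) : Prop :=
  ∃ (P : ModuleCat.{0} R) (_ : Projective P) (f : P ⟶ M) (ι : S ⟶ P),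
    Function.Surjective f ∧ Function.Injective ι ∧ Function.Exact ι f

/-- `S` is an `n`-th syzygy of `M`. -/
def IsNthSyzygy : ℕ → ModuleCat.{0} R → ModuleCat.{0} R → Prop
  | 0, S, M => Nonempty (S ≅ M)
  | n + 1, S, M => ∃ S' : ModuleCat.{0} R, IsSyzygy R S' M ∧ IsNthSyzygy n S S'

/-- `G` is Gorenstein projective: a kernel in a totally acyclic complex of projectives. -/
def IsGorensteinProjective (G : ModuleCat.{0} R) : Prop :=
  ∃ (P : ℤ → ModuleCat.{0} R) (d : ∀ i : ℤ, P i ⟶ P (i + 1)),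
    (∀ i, Projective (P i)) ∧
    (∀ i, Function.Exact (d i) (d (i + 1))) ∧
    (∀ (Q : ModuleCat.{0} R), Projective Q → ∀ i : ℤ,
      Function.Exact (fun φ : P (i + 1 + 1) ⟶ Q => d (i + 1) ≫ φ)
        (fun φ : P (i + 1) ⟶ Q => d i ≫ φ)) ∧
    ∃ ι : G ⟶ P 0, Function.Injective ι ∧ Function.Exact ι (d 0)

/-- Gorenstein projective dimension at most `n`: some `n`-th syzygy is Gorenstein
projective. -/
def gpdLE (n : ℕ) (M : ModuleCat.{0} R) : Prop :=
  ∃ S : ModuleCat.{0} R, IsNthSyzygy R n S M ∧ IsGorensteinProjective R S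

/-- `N` is strongly Gorenstein projective. -/
def IsStronglyGorensteinProjective (N : ModuleCat.{0} R) : Prop :=
  ∃ (P : ModuleCat.{0} R) (_ : Projective P) (f : P ⟶ P),
    Function.Exact f f ∧
    (∀ (Q : ModuleCat.{0} R), Projective Q →
      Function.Exact (fun φ : P ⟶ Q => f ≫ φ) (fun φ : P ⟶ Q => f ≫ φ)) ∧
    ∃ ι : N ⟶ P, Function.Injective ι ∧ Function.Exact ι f

/-- `S` is a direct summand of `N`. -/
def IsDirectSummand (S N : ModuleCat.{0} R) : Prop :=
  ∃ Y : ModuleCat.{0} R, Nonempty (ModuleCat.of R (↥S × ↥Y) ≅ N)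

/-- `Add T`: direct summands of direct sums of copies of `T`. -/
def AddClass (T : ModuleCat.{0} R) : Set (ModuleCat.{0} R) :=
  {X | ∃ (ι : Type) (Y : ModuleCat.{0} R),
    Nonempty (ModuleCat.of R (↥X × ↥Y) ≅ ModuleCat.of R (ι →₀ ↥T))}

/-- `(𝒜, ℬ)` is a cotorsion pair. -/
def IsCotorsionPair (𝒜 ℬ : Set (ModuleCat.{0} R)) : Prop :=
  𝒜 = leftPerp R ℬ ∧ ℬ = rightPerp R 𝒜

/-- A hereditary pair: `Ext^i(A,B) = 0` for all `i ≥ 1`, `A ∈ 𝒜`, `B ∈ ℬ`. -/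
def IsHereditaryPair (𝒜 ℬ : Set (ModuleCat.{0} R)) : Prop :=
  ∀ i : ℕ, 1 ≤ i → ∀ A ∈ 𝒜, ∀ B ∈ ℬ, extVanish R i A B

/-- A complete pair: every module has special approximations. -/
def IsCompletePair (𝒜 ℬ : Set (ModuleCat.{0} R)) : Prop :=
  ∀ M : ModuleCat.{0} R,
    (∃ (B : ModuleCat.{0} R) (_ : B ∈ ℬ) (L : ModuleCat.{0} R) (_ : L ∈ 𝒜)
      (f : M ⟶ B) (g : B ⟶ L),
      Function.Injective f ∧ Function.Surjective g ∧ Function.Exact f g) ∧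
    (∃ (D : ModuleCat.{0} R) (_ : D ∈ ℬ) (C : ModuleCat.{0} R) (_ : C ∈ 𝒜)
      (f : D ⟶ C) (g : C ⟶ M),
      Function.Injective f ∧ Function.Surjective g ∧ Function.Exact f g)

/-- `T` is an `n`-tilting module. -/
def IsNTilting (n : ℕ) (T : ModuleCat.{0} R) : Prop :=
  pdLE R n T ∧
  (∀ (ι : Type) (i : ℕ), 1 ≤ i → extVanish R i T (ModuleCat.of R (ι →₀ ↥T))) ∧
  ∃ (C : ℕ → ModuleCat.{0} R) (D : ∀ i : ℕ, C i ⟶ C (i + 1)),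
    (∀ i, Function.Exact (D i) (D (i + 1))) ∧
    Subsingleton (C 0) ∧
    Nonempty (C 1 ≅ ModuleCat.of R R) ∧
    (∀ i : ℕ, 2 ≤ i → i ≤ n + 2 → C i ∈ AddClass R T) ∧
    (∀ i : ℕ, n + 3 ≤ i → Subsingleton (C i))

/-- `T` is a tilting module. -/
def IsTilting (T : ModuleCat.{0} R) : Prop :=
  ∃ n : ℕ, IsNTilting R n T

end

/-!
Dimension shifting along injective cosyzygies. For `0 → X → I → X' → 0` with `I` injective,
the connecting map gives `Ext^(k+1)(M, X') ≅ Ext^(k+2)(M, X)`, so for an `m`-th cosyzygy `Ωᵐ X`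
of `X` we get `Ext^j(M, Ωᵐ X) = 0 ↔ Ext^(j+m)(M, X) = 0` for `j ≥ 1`. If `pd G ≤ n` and `m ≥ n`,
then `Ωᵐ X ∈ G^{⊥∞}`, hence `Ext^1(W, Ωᵐ X) = 0` for `W ∈ ^⊥(G^{⊥∞})`, i.e. `Ext^(m+1)(W, X) = 0`.
-/

open Limits

namespace CategoryTheory

variable {C : Type*} [Category* C] [Abelian C]

def ChainComplex.linearYonedaObjMap (K : ChainComplex C ℕ) {Y Y' : C} (g : Y ⟶ Y') :
    K.linearYonedaObj ℤ Y ⟶ K.linearYonedaObj ℤ Y' where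
  f i := ((linearYoneda ℤ C).map g).app (op (K.X i))
  comm' i j _ := by
    ext φ
    exact (Category.assoc (K.d j i) φ g).symm

lemma ChainComplex.shortExact_linearYonedaObjMap (K : ChainComplex C ℕ)
    [∀ i, Projective (K.X i)] {S : ShortComplex C} (hS : S.ShortExact) :
    (ShortComplex.mk (K.linearYonedaObjMap S.f) (K.linearYonedaObjMap S.g)
      (by
        ext i φ
        exact (Category.assoc φ S.f S.g).trans (by rw [S.zero]; exact comp_zero))).ShortExact := by
  have := hS.mono_f
  have := hS.epi_g
  rw [HomologicalComplex.shortExact_iff_degreewise_shortExact]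
  intro i
  refine ShortComplex.ShortExact.mk' ?_ ?_ ?_
  · rw [ShortComplex.moduleCat_exact_iff]
    intro ψ hψ
    exact ⟨hS.exact.liftFromProjective ψ hψ, hS.exact.liftFromProjective_comp ψ hψ⟩
  · rw [ModuleCat.mono_iff_injective]
    intro ψ ψ' h
    exact (cancel_mono S.f).1 h
  · rw [ModuleCat.epi_iff_surjective]
    intro ψ
    exact ⟨Projective.factorThru ψ S.g, Projective.factorThru_comp ψ S.g⟩

lemma ProjectiveResolution.isZero_homology_linearYonedaObj_succ {M : C}
    (P : ProjectiveResolution M) (I : C) [Injective I] (k : ℕ) :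
    IsZero ((P.complex.linearYonedaObj ℤ I).homology (k + 1)) := by
  rw [← HomologicalComplex.exactAt_iff_isZero_homology,
    HomologicalComplex.exactAt_iff' _ k (k + 1) (k + 2) (by simp) (by simp),
    ShortComplex.moduleCat_exact_iff]
  intro ψ hψ
  exact ⟨(P.exact_succ k).descToInjective ψ hψ, (P.exact_succ k).comp_descToInjective ψ hψ⟩

variable [EnoughProjectives C]

noncomputable def ShortComplex.ShortExact.extSuccIsoOfInjective {S : ShortComplex C}
    (hS : S.ShortExact) [Injective S.X₂] (M : C) (k : ℕ) :
    ((Ext ℤ C (k + 1)).obj (Opposite.op M)).obj S.X₃ ≅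
      ((Ext ℤ C (k + 2)).obj (Opposite.op M)).obj S.X₁ :=
  let P := ProjectiveResolution.of M
  let hT := P.complex.shortExact_linearYonedaObjMap hS
  have : IsIso (hT.δ (k + 1) (k + 2) rfl) :=
    have h₁ := P.isZero_homology_linearYonedaObj_succ S.X₂ k
    have h₂ := P.isZero_homology_linearYonedaObj_succ S.X₂ (k + 1)
    have := (hT.homology_exact₃ (k + 1) (k + 2) rfl).mono_g (h₁.eq_of_src _ _)
    have := (hT.homology_exact₁ (k + 1) (k + 2) rfl).epi_f (h₂.eq_of_tgt _ _)
    isIso_of_mono_of_epi _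
  P.isoExt (k + 1) S.X₃ ≪≫ asIso (hT.δ (k + 1) (k + 2) rfl) ≪≫ (P.isoExt (k + 2) S.X₁).symm

variable [EnoughInjectives C]

noncomputable def cosyzygy : ℕ → C → C
  | 0, X => X
  | m + 1, X => cosyzygy m (cokernel (Injective.ι X))

lemma isZero_ext_cosyzygy_iff (M : C) (m : ℕ) (X : C) (k : ℕ) :
    IsZero (((Ext ℤ C (k + 1)).obj (op M)).obj (cosyzygy m X)) ↔
      IsZero (((Ext ℤ C (k + m + 1)).obj (op M)).obj X) := by
  induction m generalizing X with
  | zero => rfl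
  | succ m ih =>
    let ip : InjectivePresentation X := ⟨_, inferInstance, Injective.ι X, inferInstance⟩
    exact (ih _).trans (ip.shortExact_shortComplex.extSuccIsoOfInjective M (k + m)).isZero_iff

end CategoryTheory

lemma extVanish_cosyzygy_iff {R : Type} [Ring R] (M X : ModuleCat.{0} R) (m k : ℕ) :
    extVanish R (k + 1) M (cosyzygy m X) ↔ extVanish R (k + m + 1) M X :=
  ModuleCat.isZero_iff_subsingleton.symm.trans
    ((isZero_ext_cosyzygy_iff M m X k).trans ModuleCat.isZero_iff_subsingleton)

theorem stmt2 (R : Type) [Ring R] (n : ℕ) (G : ModuleCat.{0} R)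
    (h : pdLE R n G) :
    ∀ W ∈ leftPerp R (perpInf R G), pdLE R n W := by
  intro W hW X i hi
  obtain ⟨m, rfl⟩ : ∃ m, i = m + 1 := ⟨i - 1, by omega⟩
  have hX : cosyzygy m X ∈ perpInf R G := fun j hj => by
    obtain ⟨k, rfl⟩ : ∃ k, j = k + 1 := ⟨j - 1, by omega⟩
    exact (extVanish_cosyzygy_iff G X m k).2 (h X _ (by omega))
  simpa using (extVanish_cosyzygy_iff W X m 0).1 (hW _ hX)
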